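/- Fix ν ≥ 0 and set p = 2/(2+ν), q = 1 − p. For all reals 0 < ε ≤ t ≤ 1 and every s ∈ [0,1): ε^{−1} ∑_{x=1}^∞ p q^{x−1} [ (h_{ε/t}(s))^x − (h_{ε/t}(h_t(0)·s))^x ] = (p s/(1 − q s)) · ( t^{−1}(1 − h_t(0)) ) / (1 − h_t(0) q s). In other words, the family of laws with generating functions g_t(s) = (p s/(1 − q s)) · (t^{−1}(1 − h_t(0)))/(1 − h_t(0) q s), t ∈ (0,1], is an entrance law for the conditional transition generating functions: starting from the geometric distribution p q^{x−1} at time ε and conditioning on survival at time 1 (which has probability ε), the law at time t has generating function g_t. -/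

import Mathlib

/-!
Write `f(y) = p y / (1 - q y)` for the generating function of the geometric law `p q^(x-1)`.
In the coordinate `1 / (1 - y)`, `h_a` is the affine map `u ↦ (u + ν/2 (1 - a)) / a` and `1 - f`
becomes `u ↦ 1 / (p u + q)`; since `q = p ν/2` these combine to `1 - f ∘ h_a = a (1 - f)`.
Summing the geometric series, the left-hand side is `ε⁻¹ (f(h_a s) - f(h_a(m s)))` with
`a = ε/t` and `m = h_t(0)`, which is therefore `t⁻¹ (f s - f(m s))`, and this factors as claimed.
-/

open Filter Finset

/-- The linear fractional generating function `h_a(s)` (with parameter ν). -/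
noncomputable def h (ν a s : ℝ) : ℝ :=
  if s = 1 then 1 else 1 - a * (1/(1-s) + ν/2 * (1-a))⁻¹

noncomputable def geomPGF (p q s : ℝ) : ℝ := p * s / (1 - q * s)

theorem hasSum_geomPGF_sub {p q y z : ℝ} (hy : |q * y| < 1) (hz : |q * z| < 1) :
    HasSum (fun x : ℕ => p * q ^ x * (y ^ (x + 1) - z ^ (x + 1)))
      (geomPGF p q y - geomPGF p q z) := by
  have hasSum_pgf {w : ℝ} (hw : |q * w| < 1) :
      HasSum (fun x : ℕ => p * q ^ x * w ^ (x + 1)) (geomPGF p q w) := by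
    have e : (fun x : ℕ => p * q ^ x * w ^ (x + 1)) = fun x => p * w * (q * w) ^ x :=
      funext fun x => by ring
    rw [e, geomPGF, div_eq_mul_inv]
    exact (hasSum_geometric_of_abs_lt_one hw).mul_left (p * w)
  simp only [mul_sub]
  exact (hasSum_pgf hy).sub (hasSum_pgf hz)

theorem one_sub_geomPGF {p q y : ℝ} (hpq : p + q = 1) (hy : 1 - q * y ≠ 0) :
    1 - geomPGF p q y = (1 - y) / (1 - q * y) := by
  rw [geomPGF, one_sub_div hy]
  congr 1
  linear_combination (-y) * hpq

theorem geomPGF_sub_geomPGF_mul {p q m s : ℝ} (hs : 1 - q * s ≠ 0) (hms : 1 - m * q * s ≠ 0) :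
    geomPGF p q s - geomPGF p q (m * s) = geomPGF p q s * (1 - m) / (1 - m * q * s) := by
  have hms' : 1 - q * (m * s) ≠ 0 := by rwa [mul_left_comm, ← mul_assoc]
  rw [geomPGF, geomPGF, div_sub_div _ _ hs hms', div_mul_eq_mul_div, div_div,
    div_eq_div_iff (mul_ne_zero hs hms') (mul_ne_zero hs hms)]
  ring

theorem h_le_one {ν a s : ℝ} (hν : 0 ≤ ν) (ha0 : 0 ≤ a) (ha1 : a ≤ 1) (hs : s < 1) :
    h ν a s ≤ 1 := by
  rw [h, if_neg hs.ne]
  have : 0 < 1 / (1 - s) + ν / 2 * (1 - a) := by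
    have := one_div_pos.2 (sub_pos.2 hs); positivity
  have : 0 ≤ a * (1 / (1 - s) + ν / 2 * (1 - a))⁻¹ := by positivity
  linarith

theorem h_nonneg {ν a s : ℝ} (hν : 0 ≤ ν) (ha1 : a ≤ 1) (hs0 : 0 ≤ s) (hs : s < 1) :
    0 ≤ h ν a s := by
  rw [h, if_neg hs.ne, sub_nonneg, ← div_eq_mul_inv]
  have : 1 ≤ 1 / (1 - s) := one_le_one_div (by linarith) (by linarith)
  have : 0 ≤ ν / 2 * (1 - a) := mul_nonneg (by linarith) (by linarith)
  rw [div_le_one (by linarith)]; linarith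

section

variable {ν p q : ℝ} (hν : 0 ≤ ν) (hp : p = 2 / (2 + ν)) (hq : q = 1 - p)
include hν hp hq

theorem geom_q_nonneg : 0 ≤ q := by
  rw [hq, hp, sub_nonneg, div_le_one (by linarith)]; linarith

theorem geom_q_lt_one : q < 1 := by
  have : 0 < p := by rw [hp]; positivity
  linarith

theorem one_sub_geomPGF_h {a s : ℝ} (ha0 : 0 ≤ a) (ha1 : a ≤ 1) (hs : s < 1) :
    1 - geomPGF p q (h ν a s) = a * (1 - geomPGF p q s) := by
  have hq0 := geom_q_nonneg hν hp hq
  have hq1 := geom_q_lt_one hν hp hq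
  have hpq : p + q = 1 := by rw [hq]; ring
  have hqp : q = p * (ν / 2) := by rw [hq, hp]; field_simp; ring
  have hh := h_le_one hν ha0 ha1 hs
  rw [one_sub_geomPGF hpq (by nlinarith), one_sub_geomPGF hpq (by nlinarith), h, if_neg hs.ne]
  have hs' : 0 < 1 - s := sub_pos.2 hs
  set c := 1 / (1 - s) + ν / 2 * (1 - a) with hc
  have hc0 : 0 < c := by
    have : 0 ≤ ν / 2 * (1 - a) := mul_nonneg (by linarith) (by linarith)
    have : 0 < 1 / (1 - s) := by positivity
    linarith
  have hcs : c * (1 - s) = 1 + ν / 2 * (1 - a) * (1 - s) := by rw [hc]; field_simp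
  have : 0 < 1 - q * s := by nlinarith
  have : 0 < c - (c - a) * q := by nlinarith
  field_simp
  linear_combination (a * (1 - s) * c - a) * hpq - a * p * hcs + a * (1 - a) * (1 - s) * hqp

theorem geomPGF_h_sub_geomPGF_h {a s₁ s₂ : ℝ} (ha0 : 0 ≤ a) (ha1 : a ≤ 1) (hs₁ : s₁ < 1)
    (hs₂ : s₂ < 1) :
    geomPGF p q (h ν a s₁) - geomPGF p q (h ν a s₂) = a * (geomPGF p q s₁ - geomPGF p q s₂) := by
  linear_combination one_sub_geomPGF_h hν hp hq ha0 ha1 hs₂ - one_sub_geomPGF_h hν hp hq ha0 ha1 hs₁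

end

theorem stmt9 (ν : ℝ) (hν : 0 ≤ ν) (p q : ℝ) (hp : p = 2/(2+ν)) (hq : q = 1 - p)
    (ε t : ℝ) (hε : 0 < ε) (hεt : ε ≤ t) (ht : t ≤ 1)
    (s : ℝ) (hs : s ∈ Set.Ico (0 : ℝ) 1) :
    HasSum (fun x : ℕ => ε⁻¹ * (p * q ^ x *
        ((h ν (ε/t) s) ^ (x+1) - (h ν (ε/t) (h ν t 0 * s)) ^ (x+1))))
      (p * s / (1 - q * s) * (t⁻¹ * (1 - h ν t 0)) / (1 - h ν t 0 * q * s)) := by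
  obtain ⟨hs0, hs1⟩ := hs
  have ht0 : 0 < t := hε.trans_le hεt
  have ha0 : 0 ≤ ε / t := by positivity
  have ha1 : ε / t ≤ 1 := (div_le_one ht0).2 hεt
  have hq0 := geom_q_nonneg hν hp hq
  have hq1 := geom_q_lt_one hν hp hq
  set m := h ν t 0
  have hm0 : 0 ≤ m := h_nonneg hν ht le_rfl one_pos
  have hm1 : m ≤ 1 := h_le_one hν ht0.le ht one_pos
  have hms1 : m * s < 1 := by nlinarith
  have hqy {y : ℝ} (hy0 : 0 ≤ y) (hy1 : y ≤ 1) : |q * y| < 1 := by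
    rw [abs_of_nonneg (by positivity)]; nlinarith
  have hsum := (hasSum_geomPGF_sub (p := p)
    (hqy (h_nonneg hν ha1 hs0 hs1) (h_le_one hν ha0 ha1 hs1))
    (hqy (h_nonneg hν ha1 (by positivity) hms1) (h_le_one hν ha0 ha1 hms1))).mul_left ε⁻¹
  suffices ε⁻¹ * (geomPGF p q (h ν (ε / t) s) - geomPGF p q (h ν (ε / t) (m * s))) =
      p * s / (1 - q * s) * (t⁻¹ * (1 - m)) / (1 - m * q * s) by rwa [this] at hsum
  calc ε⁻¹ * (geomPGF p q (h ν (ε / t) s) - geomPGF p q (h ν (ε / t) (m * s)))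
      = ε⁻¹ * (ε / t * (geomPGF p q s - geomPGF p q (m * s))) := by
        rw [geomPGF_h_sub_geomPGF_h hν hp hq ha0 ha1 hs1 hms1]
    _ = t⁻¹ * (geomPGF p q s - geomPGF p q (m * s)) := by field_simp
    _ = _ := by rw [geomPGF_sub_geomPGF_mul (by nlinarith) (by nlinarith), geomPGF]; ring
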